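/- arXiv:1307.2641 — 4 statements merged into one kernel-verified Lean document; each statement's English description precedes it below -/
import Mathlib

section
/- Let Q₁ be a symmetric n×n matrix, Q₂ a symmetric m×m matrix, x ∈ ℝⁿ with [[1,xᵀ],[x,Q₁]] ⪰ 0, y ∈ ℝᵐ with [[1,yᵀ],[y,Q₂]] ⪰ 0, and let λ₁, λ₂ > 0 with λ₁ + λ₂ = 1. Then the stacked vector z = (x,y) ∈ ℝ^{n+m} satisfies [[1,zᵀ],[z,Q]] ⪰ 0 where Q is the block-diagonal matrix diag(Q₁/λ₁, Q₂/λ₂). -/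
open Matrix

def inEllipsoidQ {ι : Type*} [Fintype ι] (Q : Matrix ι ι ℝ) (x : ι → ℝ) : Prop :=
  (Matrix.fromBlocks (1 : Matrix Unit Unit ℝ)
      (Matrix.of fun _ j => x j) (Matrix.of fun i _ => x i) Q).PosSemidef

/-!
Scaling the first coordinate by `λ > 0` turns `[[1, xᵀ], [x, Q]] ⪰ 0` into `[[λ, xᵀ], [x, Q/λ]] ⪰ 0`
(evaluate the quadratic form at `(λa, u)` and divide by `λ`). The matrix of the claim is the sum of
these two matrices for `(λ₁, x, Q₁)` and `(λ₂, y, Q₂)`, placed in complementary blocks, because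
`λ₁ + λ₂ = 1`.
-/

section

variable {ι : Type*} [Fintype ι]

lemma dotProduct_fromBlocks_one_mulVec (Q : Matrix ι ι ℝ) (x u : ι → ℝ) (a : ℝ) :
    Sum.elim (fun _ : Unit => a) u ⬝ᵥ
        (fromBlocks (1 : Matrix Unit Unit ℝ) (of fun _ j => x j) (of fun i _ => x i) Q *ᵥ
          Sum.elim (fun _ => a) u) =
      a * a + 2 * a * (x ⬝ᵥ u) + u ⬝ᵥ Q *ᵥ u := by
  have hrow : (of fun _ j => x j : Matrix Unit ι ℝ) *ᵥ u = fun _ => x ⬝ᵥ u := rfl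
  have hcol : (of fun i _ => x i : Matrix ι Unit ℝ) *ᵥ (fun _ => a) = a • x := by
    ext i; simp [mulVec, dotProduct, mul_comm]
  simp only [fromBlocks_mulVec, sumElim_dotProduct_sumElim, Sum.elim_comp_inl, Sum.elim_comp_inr,
    one_mulVec, dotProduct_add, hrow, hcol, dotProduct_smul, dotProduct_comm u x]
  simp only [dotProduct, Finset.univ_unique, Finset.sum_singleton, smul_eq_mul]
  ring

lemma inEllipsoidQ_iff {Q : Matrix ι ι ℝ} {x : ι → ℝ} :
    inEllipsoidQ Q x ↔
      Q.IsHermitian ∧ ∀ (a : ℝ) (u : ι → ℝ), 0 ≤ a * a + 2 * a * (x ⬝ᵥ u) + u ⬝ᵥ Q *ᵥ u := by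
  rw [inEllipsoidQ, posSemidef_iff_dotProduct_mulVec, isHermitian_fromBlocks_iff]
  have hrow : (of fun _ j => x j : Matrix Unit ι ℝ)ᴴ = of fun i _ => x i := by
    ext; simp
  have hcol : (of fun i _ => x i : Matrix ι Unit ℝ)ᴴ = of fun _ j => x j := by
    ext; simp
  simp only [isHermitian_one, hrow, hcol, star_trivial, true_and]
  refine and_congr_right fun _ => ⟨fun h a u => ?_, fun h v => ?_⟩
  · simpa [dotProduct_fromBlocks_one_mulVec] using h (Sum.elim (fun _ => a) u)
  · have hv : v = Sum.elim (fun _ => v (Sum.inl ())) (v ∘ Sum.inr) := by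
      ext (_ | _) <;> rfl
    rw [hv, dotProduct_fromBlocks_one_mulVec]
    exact h _ _

lemma inEllipsoidQ.scaled_quadForm_nonneg {Q : Matrix ι ι ℝ} {x : ι → ℝ} (h : inEllipsoidQ Q x)
    {l : ℝ} (hl : 0 < l) (a : ℝ) (u : ι → ℝ) :
    0 ≤ l * (a * a) + 2 * a * (x ⬝ᵥ u) + l⁻¹ * (u ⬝ᵥ Q *ᵥ u) := by
  calc 0 ≤ l⁻¹ * ((l * a) * (l * a) + 2 * (l * a) * (x ⬝ᵥ u) + u ⬝ᵥ Q *ᵥ u) :=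
        mul_nonneg (inv_nonneg.2 hl.le) ((inEllipsoidQ_iff.1 h).2 (l * a) u)
    _ = l * (a * a) + 2 * a * (x ⬝ᵥ u) + l⁻¹ * (u ⬝ᵥ Q *ᵥ u) := by field_simp

end

theorem stmt_1_general {n m : ℕ} (Q₁ : Matrix (Fin n) (Fin n) ℝ) (Q₂ : Matrix (Fin m) (Fin m) ℝ)
    (x : Fin n → ℝ) (y : Fin m → ℝ)
    (hx : inEllipsoidQ Q₁ x) (hy : inEllipsoidQ Q₂ y)
    (l₁ l₂ : ℝ) (hl₁ : 0 < l₁) (hl₂ : 0 < l₂) (hsum : l₁ + l₂ = 1) :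
    inEllipsoidQ (Matrix.fromBlocks (l₁⁻¹ • Q₁) 0 0 (l₂⁻¹ • Q₂)) (Sum.elim x y) := by
  rw [inEllipsoidQ_iff]
  refine ⟨((inEllipsoidQ_iff.1 hx).1.smul (IsSelfAdjoint.all _)).fromBlocks (by simp)
    ((inEllipsoidQ_iff.1 hy).1.smul (IsSelfAdjoint.all _)), fun a v => ?_⟩
  obtain ⟨u, w, rfl⟩ : ∃ u w, v = Sum.elim u w := ⟨_, _, (Sum.elim_comp_inl_inr v).symm⟩
  simp only [fromBlocks_mulVec, sumElim_dotProduct_sumElim, Sum.elim_comp_inl, Sum.elim_comp_inr,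
    zero_mulVec, add_zero, zero_add, smul_mulVec, dotProduct_smul, smul_eq_mul]
  linear_combination
    hx.scaled_quadForm_nonneg hl₁ a u + hy.scaled_quadForm_nonneg hl₂ a w + a * a * hsum

theorem stmt_1 {n m : ℕ} (Q₁ : Matrix (Fin n) (Fin n) ℝ) (Q₂ : Matrix (Fin m) (Fin m) ℝ)
    (hQ₁ : Q₁.IsSymm) (hQ₂ : Q₂.IsSymm)
    (x : Fin n → ℝ) (y : Fin m → ℝ)
    (hx : inEllipsoidQ Q₁ x) (hy : inEllipsoidQ Q₂ y)
    (l₁ l₂ : ℝ) (hl₁ : 0 < l₁) (hl₂ : 0 < l₂) (hsum : l₁ + l₂ = 1) :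
    inEllipsoidQ (Matrix.fromBlocks (l₁⁻¹ • Q₁) 0 0 (l₂⁻¹ • Q₂)) (Sum.elim x y) :=
  stmt_1_general Q₁ Q₂ x y hx hy l₁ l₂ hl₁ hl₂ hsum
end

section
/- Suppose P ∈ ℝ^{n×n} is symmetric positive definite, 0 < α, and the block matrix [[AᵀPA − (1−α)P, AᵀPB],[BᵀPA, BᵀPB − αI_m]] is negative semidefinite. Then for all x ∈ ℝⁿ and y ∈ ℝᵐ with xᵀPx ≤ 1 and yᵀy ≤ 1, the successor state x₊ = Ax + By satisfies x₊ᵀ P x₊ ≤ 1. -/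
/-!
Testing the LMI against the stacked vector `(x, y)` gives the dissipation inequality
`V(Ax + By) ≤ (1 - α) V(x) + α ‖y‖²` for `V(x) = xᵀPx`; for `α ≤ 1` its right-hand side is a convex
combination of two numbers at most `1`. For `α > 1` the case `y = 0` gives `V(x) ≤ 0` for every `x`,
so positive definiteness leaves only the zero state.
-/

open Matrix

theorem Matrix.sumElim_dotProduct_fromBlocks_mulVec_sumElim {ι κ R : Type*} [Fintype ι]
    [Fintype κ] [NonUnitalNonAssocSemiring R] (A : Matrix ι ι R) (B : Matrix ι κ R)
    (C : Matrix κ ι R) (D : Matrix κ κ R) (u : ι → R) (v : κ → R) :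
    Sum.elim u v ⬝ᵥ (fromBlocks A B C D *ᵥ Sum.elim u v) =
      u ⬝ᵥ (A *ᵥ u) + u ⬝ᵥ (B *ᵥ v) + (v ⬝ᵥ (C *ᵥ u) + v ⬝ᵥ (D *ᵥ v)) := by
  simp only [fromBlocks_mulVec, Sum.elim_comp_inl, Sum.elim_comp_inr, sumElim_dotProduct_sumElim,
    dotProduct_add]

theorem Matrix.PosDef.eq_zero_of_dotProduct_mulVec_nonpos {ι : Type*} [Fintype ι]
    {P : Matrix ι ι ℝ} (hP : P.PosDef) {x : ι → ℝ} (hx : x ⬝ᵥ (P *ᵥ x) ≤ 0) : x = 0 := by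
  by_contra hne
  simpa using (hx.trans_lt (hP.dotProduct_mulVec_pos hne))

section LMI

variable {ι κ : Type*} [Fintype ι] [Fintype κ] [DecidableEq κ]
  {P A : Matrix ι ι ℝ} {B : Matrix ι κ ℝ} {α : ℝ}

theorem dotProduct_mulVec_add_le_of_posSemidef_neg_fromBlocks
    (hLMI : (-(fromBlocks (Aᵀ * P * A - (1 - α) • P) (Aᵀ * P * B)
        (Bᵀ * P * A) (Bᵀ * P * B - α • (1 : Matrix κ κ ℝ)))).PosSemidef)
    (u : ι → ℝ) (v : κ → ℝ) :
    (A *ᵥ u + B *ᵥ v) ⬝ᵥ (P *ᵥ (A *ᵥ u + B *ᵥ v)) ≤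
      (1 - α) * (u ⬝ᵥ (P *ᵥ u)) + α * (v ⬝ᵥ v) := by
  have h := hLMI.dotProduct_mulVec_nonneg (Sum.elim u v)
  have hA : ∀ w, u ⬝ᵥ (Aᵀ *ᵥ w) = (A *ᵥ u) ⬝ᵥ w := fun w => by
    rw [dotProduct_mulVec, vecMul_transpose]
  have hB : ∀ w, v ⬝ᵥ (Bᵀ *ᵥ w) = (B *ᵥ v) ⬝ᵥ w := fun w => by
    rw [dotProduct_mulVec, vecMul_transpose]
  simp only [star_trivial, neg_mulVec, dotProduct_neg, sumElim_dotProduct_fromBlocks_mulVec_sumElim,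
    sub_mulVec, smul_mulVec, one_mulVec, dotProduct_sub, dotProduct_smul, smul_eq_mul,
    Matrix.mul_assoc, ← mulVec_mulVec, hA, hB] at h
  simp only [mulVec_add, dotProduct_add, add_dotProduct]
  linarith

theorem eq_zero_of_posSemidef_neg_fromBlocks_of_one_lt (hP : P.PosDef)
    (hLMI : (-(fromBlocks (Aᵀ * P * A - (1 - α) • P) (Aᵀ * P * B)
        (Bᵀ * P * A) (Bᵀ * P * B - α • (1 : Matrix κ κ ℝ)))).PosSemidef)
    (hα : 1 < α) (x : ι → ℝ) : x = 0 := by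
  have hstep := dotProduct_mulVec_add_le_of_posSemidef_neg_fromBlocks hLMI x 0
  simp only [mulVec_zero, add_zero, dotProduct_zero, mul_zero] at hstep
  have hAx := hP.posSemidef.dotProduct_mulVec_nonneg (A *ᵥ x)
  rw [star_trivial] at hAx
  refine hP.eq_zero_of_dotProduct_mulVec_nonpos ?_
  nlinarith

end LMI

theorem stmt_3 {n m : ℕ} (P : Matrix (Fin n) (Fin n) ℝ) (hP : P.PosDef)
    (A : Matrix (Fin n) (Fin n) ℝ) (B : Matrix (Fin n) (Fin m) ℝ)
    (α : ℝ) (hα : 0 < α)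
    (hLMI : (-(Matrix.fromBlocks (Aᵀ * P * A - (1 - α) • P) (Aᵀ * P * B)
        (Bᵀ * P * A) (Bᵀ * P * B - α • (1 : Matrix (Fin m) (Fin m) ℝ)))).PosSemidef) :
    ∀ (x : Fin n → ℝ) (y : Fin m → ℝ),
      x ⬝ᵥ (P *ᵥ x) ≤ 1 → y ⬝ᵥ y ≤ 1 →
      (A *ᵥ x + B *ᵥ y) ⬝ᵥ (P *ᵥ (A *ᵥ x + B *ᵥ y)) ≤ 1 := by
  intro x y hx hy
  rcases le_or_gt α 1 with hα1 | hα1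
  · calc _ ≤ (1 - α) * (x ⬝ᵥ (P *ᵥ x)) + α * (y ⬝ᵥ y) :=
          dotProduct_mulVec_add_le_of_posSemidef_neg_fromBlocks hLMI x y
      _ ≤ (1 - α) * 1 + α * 1 := by gcongr
      _ = 1 := by ring
  · simp [eq_zero_of_posSemidef_neg_fromBlocks_of_one_lt hP hLMI hα1 (A *ᵥ x + B *ᵥ y)]
end

section
/- Under the same LMI hypothesis (P ≻ 0, α > 0, [[AᵀPA − (1−α)P, AᵀPB],[BᵀPA, BᵀPB − αI]] ⪯ 0), for any initial state x(0) with x(0)ᵀPx(0) ≤ 1 and any input sequence y(k) with y(k)ᵀy(k) ≤ 1 for all k, every state x(k) of the system x(k+1) = A x(k) + B y(k) satisfies x(k)ᵀ P x(k) ≤ 1. -/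
/-!
Evaluating the LMI at the stacked vector `(u, v)` gives the dissipation inequality
`V (A u + B v) ≤ (1 - α) V u + α vᵀ v` for `V u = uᵀ P u`. For `α ≤ 1` the right-hand side is a
convex combination of two quantities bounded by `1`, so the ellipsoid `V ≤ 1` is invariant. For
`α > 1` the same inequality with `v = 0` gives `0 ≤ V (A u) ≤ (1 - α) V u`, so `V ≤ 0` everywhere.
-/

open Matrix

section

variable {ι κ R : Type*} [Fintype ι] [Fintype κ] [CommSemiring R]

theorem sumElim_dotProduct_fromBlocks_mulVec
    (M₁₁ : Matrix ι ι R) (M₁₂ : Matrix ι κ R) (M₂₁ : Matrix κ ι R) (M₂₂ : Matrix κ κ R)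
    (u : ι → R) (v : κ → R) :
    Sum.elim u v ⬝ᵥ (fromBlocks M₁₁ M₁₂ M₂₁ M₂₂ *ᵥ Sum.elim u v) =
      u ⬝ᵥ (M₁₁ *ᵥ u) + u ⬝ᵥ (M₁₂ *ᵥ v) + v ⬝ᵥ (M₂₁ *ᵥ u) + v ⬝ᵥ (M₂₂ *ᵥ v) := by
  simp only [fromBlocks_mulVec, Sum.elim_comp_inl, Sum.elim_comp_inr,
    sumElim_dotProduct_sumElim, dotProduct_add]
  ring

theorem dotProduct_transpose_mul_mul_mulVec {ι' : Type*} [Fintype ι']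
    (C : Matrix ι' ι R) (Q : Matrix ι' ι' R) (D : Matrix ι' κ R) (u : ι → R) (v : κ → R) :
    u ⬝ᵥ ((Cᵀ * Q * D) *ᵥ v) = (C *ᵥ u) ⬝ᵥ (Q *ᵥ (D *ᵥ v)) := by
  rw [← mulVec_mulVec, ← mulVec_mulVec, dotProduct_mulVec, vecMul_transpose]

end

section

variable {ι κ : Type*} [Fintype ι] [Fintype κ] [DecidableEq κ]

def ellipsoidInvarianceLMI (P A : Matrix ι ι ℝ) (B : Matrix ι κ ℝ) (α : ℝ) :
    Matrix (ι ⊕ κ) (ι ⊕ κ) ℝ :=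
  fromBlocks (Aᵀ * P * A - (1 - α) • P) (Aᵀ * P * B) (Bᵀ * P * A) (Bᵀ * P * B - α • 1)

theorem quadForm_step_le {P A : Matrix ι ι ℝ} {B : Matrix ι κ ℝ} {α : ℝ}
    (hLMI : (-ellipsoidInvarianceLMI P A B α).PosSemidef) (u : ι → ℝ) (v : κ → ℝ) :
    (A *ᵥ u + B *ᵥ v) ⬝ᵥ (P *ᵥ (A *ᵥ u + B *ᵥ v)) ≤
      (1 - α) * (u ⬝ᵥ (P *ᵥ u)) + α * (v ⬝ᵥ v) := by
  have h := hLMI.dotProduct_mulVec_nonneg (Sum.elim u v)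
  simp only [ellipsoidInvarianceLMI, star_trivial, neg_mulVec, dotProduct_neg,
    sumElim_dotProduct_fromBlocks_mulVec, sub_mulVec, dotProduct_sub,
    dotProduct_transpose_mul_mul_mulVec, smul_mulVec, one_mulVec, dotProduct_smul,
    smul_eq_mul] at h
  simp only [mulVec_add, add_dotProduct, dotProduct_add]
  linarith

theorem quadForm_nonpos_of_one_lt {P A : Matrix ι ι ℝ} {B : Matrix ι κ ℝ} {α : ℝ}
    (hP : P.PosSemidef) (hLMI : (-ellipsoidInvarianceLMI P A B α).PosSemidef) (hα : 1 < α)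
    (u : ι → ℝ) : u ⬝ᵥ (P *ᵥ u) ≤ 0 := by
  have hstep := quadForm_step_le hLMI u 0
  have hAu := hP.dotProduct_mulVec_nonneg (A *ᵥ u)
  simp only [mulVec_zero, add_zero, dotProduct_zero, mul_zero, star_trivial] at hstep hAu
  nlinarith [hP.dotProduct_mulVec_nonneg u]

theorem quadForm_step_le_one {P A : Matrix ι ι ℝ} {B : Matrix ι κ ℝ} {α : ℝ}
    (hP : P.PosSemidef) (hLMI : (-ellipsoidInvarianceLMI P A B α).PosSemidef) (hα : 0 ≤ α)
    {u : ι → ℝ} {v : κ → ℝ} (hu : u ⬝ᵥ (P *ᵥ u) ≤ 1) (hv : v ⬝ᵥ v ≤ 1) :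
    (A *ᵥ u + B *ᵥ v) ⬝ᵥ (P *ᵥ (A *ᵥ u + B *ᵥ v)) ≤ 1 := by
  rcases le_or_gt α 1 with hα₁ | hα₁
  · calc _ ≤ (1 - α) * (u ⬝ᵥ (P *ᵥ u)) + α * (v ⬝ᵥ v) := quadForm_step_le hLMI u v
      _ ≤ (1 - α) * 1 + α * 1 := by gcongr
      _ = 1 := by ring
  · exact (quadForm_nonpos_of_one_lt hP hLMI hα₁ _).trans zero_le_one

end

theorem stmt_4 {n m : ℕ} (P : Matrix (Fin n) (Fin n) ℝ) (hP : P.PosDef)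
    (A : Matrix (Fin n) (Fin n) ℝ) (B : Matrix (Fin n) (Fin m) ℝ)
    (α : ℝ) (hα : 0 < α)
    (hLMI : (-(Matrix.fromBlocks (Aᵀ * P * A - (1 - α) • P) (Aᵀ * P * B)
        (Bᵀ * P * A) (Bᵀ * P * B - α • (1 : Matrix (Fin m) (Fin m) ℝ)))).PosSemidef)
    (x : ℕ → Fin n → ℝ) (y : ℕ → Fin m → ℝ)
    (hrec : ∀ k, x (k + 1) = A *ᵥ x k + B *ᵥ y k)
    (hx0 : x 0 ⬝ᵥ (P *ᵥ x 0) ≤ 1)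
    (hy : ∀ k, y k ⬝ᵥ y k ≤ 1) :
    ∀ k, x k ⬝ᵥ (P *ᵥ x k) ≤ 1 := by
  intro k
  induction k with
  | zero => exact hx0
  | succ k ih =>
    rw [hrec k]
    exact quadForm_step_le_one hP.posSemidef hLMI hα.le ih (hy k)
end

section
/- Let Q₁, ..., Q_N be symmetric positive semidefinite matrices of sizes n₁, ..., n_N, let x_i ∈ ℝ^{n_i} satisfy [[1, x_iᵀ],[x_i, Q_i]] ⪰ 0 for each i, and let μ₁, ..., μ_N > 0 with Σ μ_i = 1. Then the concatenated vector z = (x₁, ..., x_N) satisfies [[1, zᵀ],[z, Q]] ⪰ 0 where Q is block-diagonal with blocks Q_i / μ_i. -/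
/-!
By the Schur complement, `[[1, xᵀ], [x, Q]] ⪰ 0` iff `Q - x xᵀ ⪰ 0`, i.e. `(x ⬝ u)² ≤ uᵀ Q u` for
every `u`. For the block-diagonal matrix, splitting `u` into blocks `uᵢ` and using Sedrakyan's form
of Cauchy–Schwarz with weights `μᵢ` summing to `1`,
`(∑ xᵢ ⬝ uᵢ)² ≤ ∑ (xᵢ ⬝ uᵢ)² / μᵢ ≤ ∑ uᵢᵀ Qᵢ uᵢ / μᵢ`.
-/

open Matrix

section
variable {ι : Type*} [Fintype ι]

theorem inEllipsoidQ_iff_posSemidef_sub_vecMulVec {Q : Matrix ι ι ℝ} {x : ι → ℝ} :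
    inEllipsoidQ Q x ↔ (Q - vecMulVec x x).PosSemidef := by
  set B : Matrix Unit ι ℝ := of fun _ j => x j
  have hB_conjTranspose : (of fun i _ => x i : Matrix ι Unit ℝ) = Bᴴ := by ext; simp [B]
  have hxx : vecMulVec x x = Bᴴ * B := by ext; simp [B, vecMulVec_apply, mul_apply]
  have : Invertible (1 : Matrix Unit Unit ℝ) := invertibleOne
  rw [inEllipsoidQ, hB_conjTranspose, PosDef.fromBlocks₁₁ B Q PosDef.one, inv_one, Matrix.mul_one,
    hxx]

theorem posSemidef_sub_vecMulVec_iff {Q : Matrix ι ι ℝ} {x : ι → ℝ} :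
    (Q - vecMulVec x x).PosSemidef ↔ Q.IsHermitian ∧ ∀ u, (x ⬝ᵥ u) ^ 2 ≤ u ⬝ᵥ Q *ᵥ u := by
  have hx : (vecMulVec x x).IsHermitian := by
    simpa using (posSemidef_vecMulVec_self_star x).isHermitian
  rw [posSemidef_iff_dotProduct_mulVec]
  refine and_congr ⟨fun h => by simpa using h.add hx, fun h => h.sub hx⟩
    (forall_congr' fun u => ?_)
  rw [star_trivial, sub_mulVec, dotProduct_sub, sub_nonneg, vecMulVec_mulVec, op_smul_eq_smul,
    dotProduct_smul, smul_eq_mul, dotProduct_comm u x, sq]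

end

section
variable {ι : Type*} [Fintype ι] {m : ι → Type*} [∀ i, Fintype (m i)]
  {R : Type*} [NonUnitalNonAssocSemiring R]

theorem dotProduct_sigma (u v : (Σ i, m i) → R) :
    u ⬝ᵥ v = ∑ i, (fun j => u ⟨i, j⟩) ⬝ᵥ fun j => v ⟨i, j⟩ := by
  simp only [dotProduct]
  exact Fintype.sum_sigma _

theorem blockDiagonal'_mulVec_apply [DecidableEq ι] (M : ∀ i, Matrix (m i) (m i) R)
    (v : (Σ i, m i) → R) (p : Σ i, m i) :
    (blockDiagonal' M *ᵥ v) p = (M p.1 *ᵥ fun j => v ⟨p.1, j⟩) p.2 := by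
  obtain ⟨i, j⟩ := p
  rw [mulVec, dotProduct_sigma, Finset.sum_eq_single i]
  · simp [mulVec, dotProduct]
  · intro k _ hk
    simp [dotProduct, blockDiagonal'_apply_ne _ _ _ (Ne.symm hk)]
  · simp

theorem dotProduct_blockDiagonal'_mulVec [DecidableEq ι] (M : ∀ i, Matrix (m i) (m i) R)
    (v : (Σ i, m i) → R) :
    v ⬝ᵥ blockDiagonal' M *ᵥ v = ∑ i, (fun j => v ⟨i, j⟩) ⬝ᵥ M i *ᵥ fun j => v ⟨i, j⟩ := by
  rw [dotProduct_sigma]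
  simp only [blockDiagonal'_mulVec_apply]

end

theorem stmt_17_general {N : ℕ} (n : Fin N → ℕ)
    (Q : ∀ i, Matrix (Fin (n i)) (Fin (n i)) ℝ)
    (x : ∀ i, Fin (n i) → ℝ) (hx : ∀ i, inEllipsoidQ (Q i) (x i))
    (μ : Fin N → ℝ) (hμ : ∀ i, 0 < μ i) (hsum : ∑ i, μ i = 1) :
    inEllipsoidQ (Matrix.blockDiagonal' fun i => (μ i)⁻¹ • Q i)
      (fun p : Σ i, Fin (n i) => x p.1 p.2) := by
  simp only [inEllipsoidQ_iff_posSemidef_sub_vecMulVec, posSemidef_sub_vecMulVec_iff] at hx ⊢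
  refine ⟨isHermitian_blockDiagonal'_iff.mpr fun i => (hx i).1.smul (.all _), fun u => ?_⟩
  set u' : ∀ i, Fin (n i) → ℝ := fun i j => u ⟨i, j⟩
  calc (_ ⬝ᵥ u) ^ 2 = (∑ i, x i ⬝ᵥ u' i) ^ 2 / ∑ i, μ i := by
        rw [hsum, div_one, dotProduct_sigma]
    _ ≤ ∑ i, (x i ⬝ᵥ u' i) ^ 2 / μ i := Finset.sq_sum_div_le_sum_sq_div _ _ fun i _ => hμ i
    _ ≤ ∑ i, (u' i ⬝ᵥ Q i *ᵥ u' i) / μ i := by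
      gcongr with i
      exacts [(hμ i).le, (hx i).2 (u' i)]
    _ = u ⬝ᵥ blockDiagonal' (fun i => (μ i)⁻¹ • Q i) *ᵥ u := by
      simp only [dotProduct_blockDiagonal'_mulVec, smul_mulVec, dotProduct_smul, smul_eq_mul, u']
      exact Finset.sum_congr rfl fun i _ => div_eq_inv_mul _ _

theorem stmt_17 {N : ℕ} (n : Fin N → ℕ)
    (Q : ∀ i, Matrix (Fin (n i)) (Fin (n i)) ℝ)
    (hQsym : ∀ i, (Q i).IsSymm) (hQ : ∀ i, (Q i).PosSemidef)
    (x : ∀ i, Fin (n i) → ℝ) (hx : ∀ i, inEllipsoidQ (Q i) (x i))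
    (μ : Fin N → ℝ) (hμ : ∀ i, 0 < μ i) (hsum : ∑ i, μ i = 1) :
    inEllipsoidQ (Matrix.blockDiagonal' fun i => (μ i)⁻¹ • Q i)
      (fun p : Σ i, Fin (n i) => x p.1 p.2) :=
  stmt_17_general n Q x hx μ hμ hsum
end
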